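/- arXiv:0810.0091 — 2 statements merged into one kernel-verified Lean document; each statement's English description precedes it below -/
import Mathlib

section
/- Let A be a commutative ring and let C• be a bounded cochain complex of A-modules in which every term C^i is a flat A-module and every cohomology module H^i(C•) is a flat A-module. Then for every A-module M and every integer i, there is an isomorphism of A-modules H^i(C• ⊗_A M) ≅ H^i(C•) ⊗_A M, where C• ⊗_A M denotes the complex obtained by tensoring each term with M. -/
/-!
Write `Bʲ ⊆ Zʲ ⊆ Cʲ` for the boundaries and cycles, so that `Hʲ = Zʲ / Bʲ`. Descending induction
from the degrees where `C` vanishes shows that every `Bʲ` is flat: `0 → Zʲ → Cʲ → Bʲ⁺¹ → 0`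
makes `Zʲ` flat, and then `0 → Bʲ → Zʲ → Hʲ → 0` makes `Bʲ` flat.

Since `Cⁱ / Zⁱ ≅ Bⁱ⁺¹` is flat, `Zⁱ ⊗ M → Cⁱ ⊗ M` is injective; since `Zⁱ⁺¹ / Bⁱ⁺¹ = Hⁱ⁺¹` and
`Cⁱ⁺¹ / Zⁱ⁺¹ ≅ Bⁱ⁺²` are flat, so is `Bⁱ⁺¹ ⊗ M → Cⁱ⁺¹ ⊗ M`. Hence `ker (dⁱ ⊗ M) = Zⁱ ⊗ M`, and
right exactness of `- ⊗ M` identifies its quotient by the image of `Cⁱ⁻¹ ⊗ M` with `Hⁱ ⊗ M`.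
-/

open CategoryTheory CategoryTheory.Limits MonoidalCategory TensorProduct

universe u

open Function LinearMap

section

variable {R : Type*} [CommRing R] {X₁ X₂ X₃ : Type*} [AddCommGroup X₁] [AddCommGroup X₂]
  [AddCommGroup X₃] [Module R X₁] [Module R X₂] [Module R X₃]
  (M : Type*) [AddCommGroup M] [Module R M]

theorem LinearMap.rTensor_injective_of_exact_of_flat [Module.Flat R X₃]
    (π : X₂ →ₗ[R] X₃) (hπ : Surjective π) (ι : X₁ →ₗ[R] X₂) (hι : Injective ι)
    (H : Exact ι π) : Injective (ι.rTensor M) :=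
  (lTensor_inj_iff_rTensor_inj M ι).mp (lTensor_injective_of_exact_of_flat π hπ ι hι H M)

theorem Module.Flat.ker_of_surjective [Module.Flat R X₂] [Module.Flat R X₃]
    (π : X₂ →ₗ[R] X₃) (hπ : Surjective π) : Module.Flat R (ker π) := by
  refine Module.Flat.iff_rTensor_preserves_injective_linearMap.mpr fun N N' _ _ _ _ f hf => ?_
  have hcomm : (ker π).subtype.lTensor N' ∘ₗ f.rTensor (ker π) =
      f.rTensor X₂ ∘ₗ (ker π).subtype.lTensor N := by
    rw [lTensor_comp_rTensor, rTensor_comp_lTensor]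
  refine Injective.of_comp (f := (ker π).subtype.lTensor N') ?_
  rw [← coe_comp, hcomm, coe_comp]
  exact (Module.Flat.rTensor_preserves_injective_linearMap f hf).comp
    (lTensor_injective_of_exact_of_flat π hπ _ (ker π).injective_subtype
      (exact_subtype_ker_map π) N)

theorem LinearMap.exact_subtype_ker_rangeRestrict (g : X₂ →ₗ[R] X₃) :
    Exact (ker g).subtype g.rangeRestrict := by
  rw [LinearMap.exact_iff, ker_rangeRestrict, Submodule.range_subtype]

theorem LinearMap.rTensor_ker_subtype_injective (g : X₂ →ₗ[R] X₃) [Module.Flat R (range g)] :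
    Injective ((ker g).subtype.rTensor M) :=
  rTensor_injective_of_exact_of_flat M _ g.surjective_rangeRestrict _ (ker g).injective_subtype
    g.exact_subtype_ker_rangeRestrict

theorem LinearMap.exact_rTensor_subtype_ker (g : X₂ →ₗ[R] X₃)
    (hg : Injective ((range g).subtype.rTensor M)) :
    Exact ((ker g).subtype.rTensor M) (g.rTensor M) := by
  have hfactor : g.rTensor M = (range g).subtype.rTensor M ∘ₗ g.rangeRestrict.rTensor M := by
    rw [← rTensor_comp]; rfl
  rw [hfactor, hg.comp_exact_iff_exact]
  exact rTensor_exact M g.exact_subtype_ker_rangeRestrict g.surjective_rangeRestrict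

abbrev LinearMap.homology (f : X₁ →ₗ[R] X₂) (g : X₂ →ₗ[R] X₃) : Type _ :=
  ker g ⧸ (range f).comap (ker g).subtype

variable {f : X₁ →ₗ[R] X₂} {g : X₂ →ₗ[R] X₃}

theorem Module.Flat.range_of_flat_homology (hfg : g ∘ₗ f = 0) [Module.Flat R X₂]
    [Module.Flat R (range g)] [Module.Flat R (homology f g)] : Module.Flat R (range f) := by
  have : Module.Flat R (ker g) :=
    have := Module.Flat.ker_of_surjective g.rangeRestrict g.surjective_rangeRestrict
    Module.Flat.of_linearEquiv (LinearEquiv.ofEq _ _ (ker_rangeRestrict g).symm)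
  let B := (range f).comap (ker g).subtype
  have : Module.Flat R B :=
    have := Module.Flat.ker_of_surjective B.mkQ B.mkQ_surjective
    Module.Flat.of_linearEquiv (LinearEquiv.ofEq _ _ (Submodule.ker_mkQ B).symm)
  exact Module.Flat.of_linearEquiv
    (Submodule.comapSubtypeEquivOfLe (range_le_ker_iff.mpr hfg)).symm

theorem LinearMap.rTensor_range_subtype_injective (hfg : g ∘ₗ f = 0) [Module.Flat R (range g)]
    [Module.Flat R (homology f g)] : Injective ((range f).subtype.rTensor M) := by
  let B := (range f).comap (ker g).subtype
  let e := Submodule.comapSubtypeEquivOfLe (range_le_ker_iff.mpr hfg)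
  have hfactor : (range f).subtype = (ker g).subtype ∘ₗ B.subtype ∘ₗ e.symm.toLinearMap := rfl
  have hB : Injective (B.subtype.rTensor M) :=
    rTensor_injective_of_exact_of_flat M _ B.mkQ_surjective _ B.injective_subtype
      (exact_subtype_mkQ B)
  rw [hfactor, rTensor_comp, rTensor_comp]
  exact (rTensor_ker_subtype_injective M g).comp
    (hB.comp (LinearEquiv.rTensor M e.symm).injective)

noncomputable def LinearMap.homologyRTensorEquiv (hfg : g ∘ₗ f = 0) [Module.Flat R (range g)]
    (hg : Injective ((range g).subtype.rTensor M)) :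
    homology (f.rTensor M) (g.rTensor M) ≃ₗ[R] homology f g ⊗[R] M := by
  have hf : ∀ x, f x ∈ ker g := fun x => congr($hfg x)
  have hfM : ∀ x, f.rTensor M x ∈ ker (g.rTensor M) := fun x => by
    rw [mem_ker, ← comp_apply, ← rTensor_comp, hfg, rTensor_zero, zero_apply]
  let f' := f.codRestrict (ker g) hf
  let e : (ker g ⊗[R] M) ≃ₗ[R] ker (g.rTensor M) :=
    LinearEquiv.ofInjective _ (rTensor_ker_subtype_injective M g) ≪≫ₗ
      LinearEquiv.ofEq _ _ (exact_rTensor_subtype_ker M g hg).linearMap_ker_eq.symm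
  have hcomp : e.toLinearMap ∘ₗ f'.rTensor M = (f.rTensor M).codRestrict _ hfM := by
    ext x m
    rfl
  have hexact : Exact (e.toLinearMap ∘ₗ f'.rTensor M)
      ((range f').mkQ.rTensor M ∘ₗ e.symm.toLinearMap) := by
    rw [LinearEquiv.conj_exact_iff_exact]
    exact rTensor_exact M (exact_map_mkQ_range _) (Submodule.mkQ_surjective _)
  have hsurj : Surjective ((range f').mkQ.rTensor M ∘ₗ e.symm.toLinearMap) :=
    (rTensor_surjective M (Submodule.mkQ_surjective _)).comp e.symm.surjective
  have hrange : (range (f.rTensor M)).comap (ker (g.rTensor M)).subtype =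
      range (e.toLinearMap ∘ₗ f'.rTensor M) := by
    rw [hcomp, range_codRestrict]
  exact Submodule.quotEquivOfEq _ _ hrange ≪≫ₗ hexact.linearEquivOfSurjective hsurj ≪≫ₗ
    LinearEquiv.rTensor M (Submodule.quotEquivOfEq _ _ (range_codRestrict _ _ _))

end

namespace HomologicalComplex

variable {R : Type*} [CommRing R] {ι : Type*} {c : ComplexShape ι}
  (K : HomologicalComplex (ModuleCat R) c)

theorem hom_d_comp_hom_d (i j k : ι) : (K.d j k).hom ∘ₗ (K.d i j).hom = 0 := by
  rw [← ModuleCat.hom_comp, K.d_comp_d, ModuleCat.hom_zero]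

noncomputable def homologyLinearEquiv (i j k : ι) (hi : c.prev j = i) (hk : c.next j = k) :
    K.homology j ≃ₗ[R] LinearMap.homology (K.d i j).hom (K.d j k).hom :=
  (K.homologyIsoSc' i j k hi hk).toLinearEquiv ≪≫ₗ
    (K.sc' i j k).moduleCatHomologyIso.toLinearEquiv ≪≫ₗ
    Submodule.quotEquivOfEq _ _ (range_codRestrict _ _ _)

end HomologicalComplex

theorem CochainComplex.flat_range_d {R : Type*} [CommRing R]
    (C : CochainComplex (ModuleCat R) ℤ) (b : ℤ) (hb : ∀ i, b < i → IsZero (C.X i))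
    (hflat : ∀ i, Module.Flat R (C.X i)) (hflatH : ∀ i, Module.Flat R (C.homology i)) (j : ℤ) :
    Module.Flat R (range (C.d j (j + 1)).hom) := by
  have hstep : ∀ j, Module.Flat R (range (C.d (j + 1) (j + 1 + 1)).hom) →
      Module.Flat R (range (C.d j (j + 1)).hom) := fun j _ =>
    have := hflat (j + 1)
    have := Module.Flat.of_linearEquiv
      (C.homologyLinearEquiv j (j + 1) (j + 1 + 1) (by simp) (by simp)).symm
    Module.Flat.range_of_flat_homology (C.hom_d_comp_hom_d j (j + 1) (j + 1 + 1))
  have hzero : ∀ j, b ≤ j → Module.Flat R (range (C.d j (j + 1)).hom) := fun j hj =>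
    have := ModuleCat.subsingleton_of_isZero (hb (j + 1) (by omega))
    inferInstance
  rcases le_total b j with hj | hj
  · exact hzero j hj
  · induction j, hj using Int.leInductionDown with
    | base => exact hzero b le_rfl
    | pred n _ ih =>
      apply hstep
      rwa [Int.sub_add_cancel]

theorem homology_tensor_of_flat
    (A : Type u) [CommRing A] (C : CochainComplex (ModuleCat.{u} A) ℤ)
    (hbdd : ∃ a b : ℤ, ∀ i : ℤ, (i < a ∨ b < i) → IsZero (C.X i))
    (hflat : ∀ i : ℤ, Module.Flat A (C.X i))
    (hflatH : ∀ i : ℤ, Module.Flat A (C.homology i))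
    (M : ModuleCat.{u} A) (i : ℤ) :
    Nonempty
      (((((tensorRight M).mapHomologicalComplex (ComplexShape.up ℤ)).obj C).homology i)
        ≃ₗ[A] ((C.homology i) ⊗[A] M)) := by
  obtain ⟨_, b, hb⟩ := hbdd
  have hB := C.flat_range_d b (fun j hj => hb j (Or.inr hj)) hflat hflatH
  have := hB i
  have := hB (i + 1)
  have := Module.Flat.of_linearEquiv
    (C.homologyLinearEquiv i (i + 1) (i + 1 + 1) (by simp) (by simp)).symm
  have hinj : Injective ((range (C.d i (i + 1)).hom).subtype.rTensor M) :=
    rTensor_range_subtype_injective M (C.hom_d_comp_hom_d i (i + 1) (i + 1 + 1))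
  have hprev : (ComplexShape.up ℤ).prev i = i - 1 := by simp
  have hnext : (ComplexShape.up ℤ).next i = i + 1 := by simp
  -- the differentials of the tensored complex are definitionally `(C.d _ _).hom.rTensor M`
  exact ⟨HomologicalComplex.homologyLinearEquiv _ (i - 1) i (i + 1) hprev hnext ≪≫ₗ
    homologyRTensorEquiv M (C.hom_d_comp_hom_d (i - 1) i (i + 1)) hinj ≪≫ₗ
    LinearEquiv.rTensor M (C.homologyLinearEquiv (i - 1) i (i + 1) hprev hnext).symm⟩
end

section
/- Let A₀ be a commutative ring, B a commutative A₀-algebra, N a B-module, and f, g ∈ B such that multiplication by f is injective on N and multiplication by g is injective on N/fN. Assume that N and N/(f,g)N are flat as A₀-modules. Then for every A₀-module M the four-term sequence 0 → N ⊗_{A₀} M → (N ⊗_{A₀} M) ⊕ (N ⊗_{A₀} M) → N ⊗_{A₀} M → (N/(f,g)N) ⊗_{A₀} M → 0 is exact, where the first map sends x to (−g·x, f·x), the second sends (a, b) to f·a + g·b, and the third is the map induced by the projection N → N/(f,g)N. (Here B acts on N ⊗_{A₀} M through its action on N.) -/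
/-!
Regularity of `(f, g)` makes the Koszul sequence exact before tensoring. Flatness of `N` and
`N/(f,g)N` makes `(f,g)N` flat, so the sequence splits into `0 → N → N² → (f,g)N → 0` and
`0 → (f,g)N → N → N/(f,g)N → 0`, both with flat right-hand term; such sequences stay exact,
including on the left, after tensoring with any `M`.
-/

open TensorProduct

section Flat

variable {R K N P : Type*} [CommRing R] [AddCommGroup K] [AddCommGroup N] [AddCommGroup P]
  [Module R K] [Module R N] [Module R P]
  {i : K →ₗ[R] N} {p : N →ₗ[R] P}

lemma LinearMap.rTensor_injective_of_exact_of_flat_s3 [Module.Flat R P]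
    (hi : Function.Injective i) (hp : Function.Surjective p) (H : Function.Exact i p)
    (M : Type*) [AddCommGroup M] [Module R M] :
    Function.Injective (i.rTensor M) :=
  (i.lTensor_inj_iff_rTensor_inj M).1 (p.lTensor_injective_of_exact_of_flat hp i hi H M)

lemma Module.Flat.of_exact_of_flat [Module.Flat R N] [Module.Flat R P]
    (hi : Function.Injective i) (hp : Function.Surjective p) (H : Function.Exact i p) :
    Module.Flat R K := by
  rw [Module.Flat.iff_rTensor_injective']
  intro I
  have hcomm : i.lTensor R ∘ₗ I.subtype.rTensor K = I.subtype.rTensor N ∘ₗ i.lTensor I := by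
    rw [LinearMap.lTensor_comp_rTensor, LinearMap.rTensor_comp_lTensor]
  have hinj : Function.Injective (I.subtype.rTensor N ∘ₗ i.lTensor I) :=
    (Module.Flat.rTensor_preserves_injective_linearMap _ I.injective_subtype).comp
      (p.lTensor_injective_of_exact_of_flat hp i hi H I)
  rw [← hcomm, LinearMap.coe_comp] at hinj
  exact hinj.of_comp

end Flat

section FourTerm

variable {R N₁ N₂ N₃ N₄ : Type*} [CommRing R] [AddCommGroup N₁] [AddCommGroup N₂]
  [AddCommGroup N₃] [AddCommGroup N₄] [Module R N₁] [Module R N₂] [Module R N₃] [Module R N₄]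
  [Module.Flat R N₃] [Module.Flat R N₄]
  {j : N₁ →ₗ[R] N₂} {k : N₂ →ₗ[R] N₃} {π : N₃ →ₗ[R] N₄}

lemma LinearMap.rTensor_injective_and_exact_of_flat (hj : Function.Injective j)
    (hjk : Function.Exact j k) (hkπ : Function.Exact k π) (hπ : Function.Surjective π)
    (M : Type*) [AddCommGroup M] [Module R M] :
    Function.Injective (j.rTensor M) ∧ Function.Exact (j.rTensor M) (k.rTensor M) := by
  have hS := LinearMap.exact_subtype_ker_map π
  have : Module.Flat R (LinearMap.ker π) := .of_exact_of_flat (Submodule.injective_subtype _) hπ hS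
  let k' : N₂ →ₗ[R] LinearMap.ker π := k.codRestrict _ hkπ.apply_apply_eq_zero
  have hk' : Function.Surjective k' := fun ⟨x, hx⟩ ↦
    let ⟨y, hy⟩ := (hkπ x).1 hx
    ⟨y, Subtype.ext hy⟩
  have hjk' : Function.Exact j k' := fun y ↦ Subtype.ext_iff.trans (hjk y)
  refine ⟨LinearMap.rTensor_injective_of_exact_of_flat_s3 hj hk' hjk' M, ?_⟩
  rw [show k = (LinearMap.ker π).subtype ∘ₗ k' from rfl, LinearMap.rTensor_comp,
    (LinearMap.rTensor_injective_of_exact_of_flat_s3 (Submodule.injective_subtype _) hπ hS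
      M).comp_exact_iff_exact]
  exact rTensor_exact M hjk' hk'

end FourTerm

section Koszul

variable {B N : Type*} [CommRing B] [AddCommGroup N] [Module B N] {f g : B}

lemma koszul_injective (hf : Function.Injective fun x : N => f • x) :
    Function.Injective ((-LinearMap.lsmul B N g).prod (LinearMap.lsmul B N f)) :=
  fun _ _ h ↦ hf congr(($h).2)

lemma koszul_exact_prod_coprod (hf : Function.Injective fun x : N => f • x)
    (hg : Function.Injective fun x : N ⧸ LinearMap.range (LinearMap.lsmul B N f) => g • x) :
    Function.Exact ((-LinearMap.lsmul B N g).prod (LinearMap.lsmul B N f))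
      ((LinearMap.lsmul B N f).coprod (LinearMap.lsmul B N g)) := by
  rintro ⟨a, b⟩
  change f • a + g • b = 0 ↔ ∃ x, (-(g • x), f • x) = (a, b)
  constructor
  · intro hab
    obtain ⟨x, rfl⟩ : b ∈ LinearMap.range (LinearMap.lsmul B N f) := by
      rw [← Submodule.Quotient.mk_eq_zero]
      refine hg ?_
      simp only [smul_zero, ← Submodule.Quotient.mk_smul, Submodule.Quotient.mk_eq_zero]
      exact ⟨-a, by simp [eq_neg_of_add_eq_zero_right hab]⟩
    have : a + g • x = 0 := hf <| by
      simpa only [smul_add, smul_comm f g x, smul_zero, LinearMap.lsmul_apply] using hab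
    exact ⟨x, Prod.ext (neg_eq_of_add_eq_zero_left this) rfl⟩
  · rintro ⟨x, hx⟩
    cases hx
    rw [smul_neg, smul_comm f g x, neg_add_cancel]

lemma koszul_exact_coprod_mkQ (f g : B) :
    Function.Exact ((LinearMap.lsmul B N f).coprod (LinearMap.lsmul B N g))
      (LinearMap.range (LinearMap.lsmul B N f) ⊔ LinearMap.range (LinearMap.lsmul B N g)).mkQ := by
  rw [← LinearMap.range_coprod]
  exact LinearMap.exact_map_mkQ_range _

end Koszul

section Prod

variable {R N P₁ P₂ M : Type*} [CommRing R] [AddCommGroup N] [AddCommGroup P₁] [AddCommGroup P₂]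
  [AddCommGroup M] [Module R N] [Module R P₁] [Module R P₂] [Module R M]

lemma LinearMap.prod_rTensor (u : N →ₗ[R] P₁) (v : N →ₗ[R] P₂) :
    (u.rTensor M).prod (v.rTensor M) = prodLeft R R P₁ P₂ M ∘ₗ (u.prod v).rTensor M :=
  TensorProduct.ext' fun _ _ ↦ rfl

lemma LinearMap.coprod_rTensor (u : P₁ →ₗ[R] N) (v : P₂ →ₗ[R] N) :
    (u.rTensor M).coprod (v.rTensor M) =
      (u.coprod v).rTensor M ∘ₗ (prodLeft R R P₁ P₂ M).symm.toLinearMap :=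
  (LinearEquiv.eq_comp_toLinearMap_symm _ _).2 <| TensorProduct.ext' fun _ _ ↦ (add_tmul ..).symm

end Prod

theorem koszul_complex_tensor_exact
    (A₀ B N M : Type*) [CommRing A₀] [CommRing B] [Algebra A₀ B]
    [AddCommGroup N] [Module B N] [Module A₀ N] [IsScalarTower A₀ B N]
    [AddCommGroup M] [Module A₀ M]
    (f g : B)
    (hf : Function.Injective fun x : N => f • x)
    (hg : Function.Injective
      fun x : N ⧸ LinearMap.range (LinearMap.lsmul B N f) => g • x)
    (hN : Module.Flat A₀ N)
    (hNfg : Module.Flat A₀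
      (N ⧸ (LinearMap.range (LinearMap.lsmul B N f) ⊔
        LinearMap.range (LinearMap.lsmul B N g)))) :
    Function.Injective
      (LinearMap.prod (-(((LinearMap.lsmul B N g).restrictScalars A₀).rTensor M))
        (((LinearMap.lsmul B N f).restrictScalars A₀).rTensor M)) ∧
    Function.Exact
      (LinearMap.prod (-(((LinearMap.lsmul B N g).restrictScalars A₀).rTensor M))
        (((LinearMap.lsmul B N f).restrictScalars A₀).rTensor M))
      (LinearMap.coprod (((LinearMap.lsmul B N f).restrictScalars A₀).rTensor M)
        (((LinearMap.lsmul B N g).restrictScalars A₀).rTensor M)) ∧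
    Function.Exact
      (LinearMap.coprod (((LinearMap.lsmul B N f).restrictScalars A₀).rTensor M)
        (((LinearMap.lsmul B N g).restrictScalars A₀).rTensor M))
      ((((LinearMap.range (LinearMap.lsmul B N f) ⊔
          LinearMap.range (LinearMap.lsmul B N g)).mkQ).restrictScalars A₀).rTensor M) ∧
    Function.Surjective
      ((((LinearMap.range (LinearMap.lsmul B N f) ⊔
          LinearMap.range (LinearMap.lsmul B N g)).mkQ).restrictScalars A₀).rTensor M) := by
  have hπ := Submodule.mkQ_surjective
    (LinearMap.range (LinearMap.lsmul B N f) ⊔ LinearMap.range (LinearMap.lsmul B N g))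
  have hkπ := koszul_exact_coprod_mkQ (N := N) f g
  obtain ⟨hj, hjk⟩ := LinearMap.rTensor_injective_and_exact_of_flat
    (j := ((-LinearMap.lsmul B N g).prod (LinearMap.lsmul B N f)).restrictScalars A₀)
    (k := ((LinearMap.lsmul B N f).coprod (LinearMap.lsmul B N g)).restrictScalars A₀)
    (π := (LinearMap.range (LinearMap.lsmul B N f) ⊔
      LinearMap.range (LinearMap.lsmul B N g)).mkQ.restrictScalars A₀)
    (koszul_injective hf) (koszul_exact_prod_coprod hf hg) hkπ hπ M
  rw [← LinearMap.rTensor_neg, LinearMap.prod_rTensor, LinearMap.coprod_rTensor]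
  exact ⟨(prodLeft A₀ A₀ N N M).injective.comp hj, (LinearEquiv.conj_exact_iff_exact _ _ _).2 hjk,
    LinearEquiv.precomp_exact_iff_exact.2 (rTensor_exact M hkπ hπ),
    LinearMap.rTensor_surjective M hπ⟩
end
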